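/- For every partition λ, N_{λ,λ,λ} > 0 if and only if |λ| is even. -/

import Mathlib

open YoungDiagram

/-- An LR (Littlewood–Richardson) filling witnessing the Littlewood–Richardson
coefficient `c^lam_{μ,ν}`: a ballot (lattice-word) semistandard filling of the skew
shape `lam/μ` with content `ν`.  The entry in row `i`, column `j` is `T i j`;
entries are `≥ 1` on the cells of `lam/μ` and `0` elsewhere. -/
structure LRFilling (μ ν lam : YoungDiagram) : Type where
  sub : μ ≤ lam
  T : ℕ → ℕ → ℕ
  supp : ∀ i j, T i j ≠ 0 ↔ ((i, j) ∈ lam ∧ (i, j) ∉ μ)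
  rows_weak : ∀ i j₁ j₂, j₁ ≤ j₂ → T i j₁ ≠ 0 → T i j₂ ≠ 0 → T i j₁ ≤ T i j₂
  cols_strict : ∀ i₁ i₂ j, i₁ < i₂ → T i₁ j ≠ 0 → T i₂ j ≠ 0 → T i₁ j < T i₂ j
  content : ∀ k : ℕ, Nat.card {p : ℕ × ℕ // T p.1 p.2 = k + 1} = ν.rowLen k
  ballot : ∀ i j k : ℕ,
    Nat.card {p : ℕ × ℕ // (p.1 < i ∨ (p.1 = i ∧ j ≤ p.2)) ∧ T p.1 p.2 = k + 2} ≤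
      Nat.card {p : ℕ × ℕ // (p.1 < i ∨ (p.1 = i ∧ j ≤ p.2)) ∧ T p.1 p.2 = k + 1}

/-- The Littlewood–Richardson coefficient `c^lam_{μ,ν}`. -/
noncomputable def lrCoeff (μ ν lam : YoungDiagram) : ℕ := Nat.card (LRFilling μ ν lam)

/-- The Newell–Littlewood number
`N_{μ,ν,lam} = Σ_{α,β,γ} c^μ_{α,β} c^ν_{α,γ} c^lam_{β,γ}`,
realized as the cardinality of the set of triples of LR fillings over all `α,β,γ`. -/
noncomputable def NL (μ ν lam : YoungDiagram) : ℕ :=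
  Nat.card (Σ α β γ : YoungDiagram,
    (LRFilling α β μ × LRFilling α γ ν × LRFilling β γ lam))

/-!
An LR filling of `lam/μ` with content `ν` has `|lam| = |μ| + |ν|`, so a triple counted by
`N_{lam,lam,lam}` gives `|lam| = |α| + |β| = |α| + |γ| = |β| + |γ|`, whence `|lam| = 2|β|`.

Conversely, if `|lam|` is even then `lam` has an even number `2t` of odd columns; pair the `s`-th
one with the `(t+s)`-th. Let `μ` take half of every column of `lam`, rounded up in the first `t`
odd columns and down in the others, and fill each column of `lam/μ` with `1, 2, 3, …` from the top.
Within a pair of odd columns of heights `2p+1 ≥ 2q+1` the first then misses the value `p+1` and the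
second carries `q+1` in excess; letting the first column skip `q+1` makes the content equal to `μ`,
and the ballot condition survives because the entry after the skip can be matched with the bottom
entry `q+1` of the second column. Hence `c^lam_{μ,μ} > 0` and `(μ, μ, μ)` contributes to `N`.
-/

namespace YoungDiagram

theorem card_eq_sum_rowLen (μ : YoungDiagram) {n : ℕ} (hn : μ.colLen 0 ≤ n) :
    μ.card = ∑ i ∈ Finset.range n, μ.rowLen i := by
  rw [YoungDiagram.card, Finset.card_eq_sum_card_fiberwise (f := Prod.fst)]
  · simp_rw [μ.rowLen_eq_card]
    rfl
  · rintro ⟨i, j⟩ hc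
    have : (i, 0) ∈ μ := μ.up_left_mem le_rfl (Nat.zero_le j) hc
    exact Finset.mem_range.2 ((mem_iff_lt_colLen.1 this).trans_le hn)

theorem card_transpose (μ : YoungDiagram) : μ.transpose.card = μ.card := by
  simp [YoungDiagram.card, transpose]

theorem card_eq_sum_colLen (μ : YoungDiagram) {n : ℕ} (hn : μ.rowLen 0 ≤ n) :
    μ.card = ∑ j ∈ Finset.range n, μ.colLen j := by
  rw [← card_transpose, card_eq_sum_rowLen (n := n) _ (by rwa [colLen_transpose])]
  simp only [rowLen_transpose]

theorem ext_of_rowLen {μ ν : YoungDiagram} (h : ∀ i, μ.rowLen i = ν.rowLen i) : μ = ν :=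
  SetLike.ext fun ⟨i, j⟩ => by rw [mem_iff_lt_rowLen, mem_iff_lt_rowLen, h]

end YoungDiagram

namespace LRFilling

open Finset

variable {μ ν lam μ' ν' : YoungDiagram}

theorem mem_of_T_ne_zero (F : LRFilling μ ν lam) {i j : ℕ} (h : F.T i j ≠ 0) :
    (i, j) ∈ lam :=
  ((F.supp i j).1 h).1

theorem card_filter_T_eq (F : LRFilling μ ν lam) (k : ℕ) :
    #{c ∈ lam.cells | F.T c.1 c.2 = k + 1} = ν.rowLen k := by
  rw [← F.content k, Nat.subtype_card]
  intro c
  simp only [mem_filter, mem_cells, and_iff_right_iff_imp]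
  exact fun h => F.mem_of_T_ne_zero (by omega)

theorem T_le_colLen (F : LRFilling μ ν lam) (i j : ℕ) : F.T i j ≤ ν.colLen 0 := by
  by_cases h0 : F.T i j = 0
  · omega
  obtain ⟨k, hk⟩ := Nat.exists_eq_add_one_of_ne_zero h0
  have hpos : 0 < ν.rowLen k := by
    rw [← F.card_filter_T_eq k]
    exact card_pos.2
      ⟨(i, j), mem_filter.2 ⟨(lam.mem_cells _).2 (F.mem_of_T_ne_zero (by omega)), hk⟩⟩
  have := mem_iff_lt_colLen.1 (mem_iff_lt_rowLen.2 hpos)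
  omega

theorem card_eq_add (F : LRFilling μ ν lam) : lam.card = μ.card + ν.card := by
  have hsub : μ.cells ⊆ lam.cells := cells_subset_iff.2 F.sub
  have hskew : lam.cells \ μ.cells = {c ∈ lam.cells | F.T c.1 c.2 ≠ 0} := by
    ext ⟨i, j⟩
    simp [F.supp]
  have hcount : #(lam.cells \ μ.cells) = ν.card := by
    rw [hskew, ν.card_eq_sum_rowLen le_rfl,
      card_eq_sum_card_fiberwise (f := fun c => F.T c.1 c.2 - 1) (t := range (ν.colLen 0))]
    · refine sum_congr rfl fun k _ => ?_
      rw [← F.card_filter_T_eq k, filter_filter]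
      congr 1
      exact filter_congr fun c _ => by omega
    · intro c hc
      have := F.T_le_colLen c.1 c.2
      have := (mem_filter.1 hc).2
      simp only [mem_coe, mem_range]
      omega
  have := card_le_card hsub
  rw [card_sdiff_of_subset hsub] at hcount
  simp only [YoungDiagram.card] at hcount ⊢
  omega

theorem T_le_card (F : LRFilling μ ν lam) (i j : ℕ) : F.T i j ≤ lam.card := by
  have hcol : ν.colLen 0 ≤ ν.card := by
    rw [ν.colLen_eq_card]
    exact card_le_card (filter_subset _ _)
  have := F.card_eq_add
  have := F.T_le_colLen i j
  omega

theorem eq_of_T_eq {F : LRFilling μ ν lam} {G : LRFilling μ' ν' lam} (h : F.T = G.T) :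
    μ = μ' ∧ ν = ν' := by
  refine ⟨SetLike.ext fun c => ?_, ext_of_rowLen fun k => ?_⟩
  · by_cases hc : c ∈ lam
    · have hF := F.supp c.1 c.2
      have hG := G.supp c.1 c.2
      rw [← h] at hG
      simp only [Prod.mk.eta, hc, true_and] at hF hG
      exact not_iff_not.1 (hF.symm.trans hG)
    · exact iff_of_false (fun h' => hc (F.sub h')) (fun h' => hc (G.sub h'))
  · rw [← F.content, ← G.content, h]

theorem ext {F G : LRFilling μ ν lam} (h : F.T = G.T) : F = G := by
  cases F
  cases G
  cases h
  rfl

theorem T_eq_of_eqOn {F : LRFilling μ ν lam} {G : LRFilling μ' ν' lam}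
    (h : ∀ c ∈ lam.cells, F.T c.1 c.2 = G.T c.1 c.2) : F.T = G.T := by
  funext i j
  by_cases hc : (i, j) ∈ lam
  · exact h (i, j) hc
  · rw [not_imp_comm.1 F.mem_of_T_ne_zero hc, not_imp_comm.1 G.mem_of_T_ne_zero hc]

end LRFilling

theorem finite_lrFilling_triples (lam : YoungDiagram) :
    Finite (Σ α β γ : YoungDiagram,
      (LRFilling α β lam × LRFilling α γ lam × LRFilling β γ lam)) := by
  let entries {μ ν : YoungDiagram} (F : LRFilling μ ν lam) (c : lam.cells) :
      Fin (lam.card + 1) :=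
    ⟨F.T c.1.1 c.1.2, Nat.lt_succ_of_le (F.T_le_card _ _)⟩
  have hT {μ ν μ' ν' : YoungDiagram} {F : LRFilling μ ν lam} {G : LRFilling μ' ν' lam}
      (h : entries F = entries G) : F.T = G.T :=
    LRFilling.T_eq_of_eqOn fun c hc => congrArg Fin.val (congrFun h ⟨c, hc⟩)
  refine Finite.of_injective
    (fun x => (entries x.2.2.2.1, entries x.2.2.2.2.1, entries x.2.2.2.2.2)) ?_
  rintro ⟨α, β, γ, F₁, F₂, F₃⟩ ⟨α', β', γ', F₁', F₂', F₃'⟩ h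
  simp only [Prod.mk.injEq] at h
  obtain ⟨rfl, rfl⟩ := LRFilling.eq_of_T_eq (hT h.1)
  obtain ⟨-, rfl⟩ := LRFilling.eq_of_T_eq (hT h.2.1)
  rw [LRFilling.ext (hT h.1), LRFilling.ext (hT h.2.1), LRFilling.ext (hT h.2.2)]

theorem natCard_cells_eq_natCard_cols {T : ℕ → ℕ → ℕ} {v : ℕ}
    (h : ∀ i₁ i₂ j, T i₁ j = v → T i₂ j = v → i₁ = i₂) :
    Nat.card {p : ℕ × ℕ // T p.1 p.2 = v} = Nat.card {j // ∃ i, T i j = v} :=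
  Nat.card_congr <| Equiv.ofBijective (fun p => ⟨p.1.2, p.1.1, p.2⟩)
    ⟨fun p q hpq => by
      obtain ⟨⟨i₁, j⟩, h₁⟩ := p
      obtain ⟨⟨i₂, j'⟩, h₂⟩ := q
      obtain rfl : j = j' := congrArg Subtype.val hpq
      obtain rfl := h i₁ i₂ j h₁ h₂
      rfl,
    fun ⟨j, i, hi⟩ => ⟨⟨(i, j), hi⟩, rfl⟩⟩

theorem ballot_of_prev {T : ℕ → ℕ → ℕ} (hT : {c : ℕ × ℕ | T c.1 c.2 ≠ 0}.Finite) {k : ℕ}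
    (prev next : ℕ × ℕ → ℕ × ℕ)
    (hprev : ∀ c : ℕ × ℕ, T c.1 c.2 = k + 2 →
      T (prev c).1 (prev c).2 = k + 1 ∧ (prev c).1 < c.1)
    (hnext : ∀ c : ℕ × ℕ, T c.1 c.2 = k + 2 → next (prev c) = c) (i j : ℕ) :
    Nat.card {p : ℕ × ℕ // (p.1 < i ∨ (p.1 = i ∧ j ≤ p.2)) ∧ T p.1 p.2 = k + 2} ≤
      Nat.card {p : ℕ × ℕ // (p.1 < i ∨ (p.1 = i ∧ j ≤ p.2)) ∧ T p.1 p.2 = k + 1} := by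
  have : Finite {p : ℕ × ℕ // (p.1 < i ∨ (p.1 = i ∧ j ≤ p.2)) ∧ T p.1 p.2 = k + 1} :=
    (hT.subset fun p (hp : _ ∧ _) => show T p.1 p.2 ≠ 0 by omega).to_subtype
  refine Nat.card_le_card_of_injective
    (fun p => ⟨prev p.1, ?_, (hprev p.1 p.2.2).1⟩) fun p q hpq => Subtype.ext ?_
  · have := (hprev p.1 p.2.2).2
    omega
  · rw [← hnext p.1 p.2.2, ← hnext q.1 q.2.2]
    exact congrArg (next ∘ Subtype.val) hpq

namespace YoungDiagram

variable (L : YoungDiagram)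

def IsOddCol (j : ℕ) : Prop := Odd (L.colLen j)

instance : DecidablePred L.IsOddCol := fun j => inferInstanceAs (Decidable (Odd (L.colLen j)))

def oddColRank (j : ℕ) : ℕ := Nat.count L.IsOddCol j

def numOddCols : ℕ := L.oddColRank (L.rowLen 0)

def IsRaisedCol (j : ℕ) : Prop := L.IsOddCol j ∧ L.oddColRank j < L.numOddCols / 2

instance : DecidablePred L.IsRaisedCol := fun _ => instDecidableAnd

noncomputable def colMate (j : ℕ) : ℕ :=
  Nat.nth L.IsOddCol <| if L.oddColRank j < L.numOddCols / 2 then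
    L.oddColRank j + L.numOddCols / 2 else L.oddColRank j - L.numOddCols / 2

variable {L}

theorem lt_rowLen_zero_of_colLen_pos {j : ℕ} (h : 0 < L.colLen j) : j < L.rowLen 0 :=
  mem_iff_lt_rowLen.1 (mem_iff_lt_colLen.2 h)

theorem oddColRank_lt_numOddCols {j : ℕ} (hj : L.IsOddCol j) : L.oddColRank j < L.numOddCols :=
  Nat.count_strict_mono hj (lt_rowLen_zero_of_colLen_pos hj.pos)

theorem isOddCol_nth {k : ℕ} (hk : k < L.numOddCols) :
    L.IsOddCol (Nat.nth L.IsOddCol k) ∧ L.oddColRank (Nat.nth L.IsOddCol k) = k :=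
  have hcard (hf : (Set.ofPred L.IsOddCol).Finite) : k < hf.toFinset.card :=
    hk.trans_le (Nat.count_le_card hf _)
  ⟨Nat.nth_mem k hcard, Nat.count_nth hcard⟩

theorem le_of_oddColRank_le {i j : ℕ} (hj : L.IsOddCol j)
    (h : L.oddColRank i ≤ L.oddColRank j) : i ≤ j :=
  not_lt.1 fun hji => (Nat.count_strict_mono hj hji).not_ge h

theorem colMate_spec (hD : Even L.numOddCols) {j : ℕ} (hj : L.IsOddCol j) :
    L.IsOddCol (L.colMate j) ∧ L.oddColRank (L.colMate j) =
      if L.oddColRank j < L.numOddCols / 2 then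
        L.oddColRank j + L.numOddCols / 2 else L.oddColRank j - L.numOddCols / 2 := by
  have := oddColRank_lt_numOddCols hj
  obtain ⟨t, ht⟩ := hD
  exact isOddCol_nth (by split_ifs <;> omega)

theorem colMate_colMate (hD : Even L.numOddCols) {j : ℕ} (hj : L.IsOddCol j) :
    L.colMate (L.colMate j) = j := by
  obtain ⟨hm, hrank⟩ := colMate_spec hD hj
  obtain ⟨hmm, hrank'⟩ := colMate_spec hD hm
  have := oddColRank_lt_numOddCols hj
  obtain ⟨t, ht⟩ := hD
  refine Nat.count_injective hmm hj ?_
  unfold oddColRank at *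
  split_ifs at hrank hrank' <;> omega

theorem isRaisedCol_colMate_iff (hD : Even L.numOddCols) {j : ℕ} (hj : L.IsOddCol j) :
    L.IsRaisedCol (L.colMate j) ↔ ¬L.IsRaisedCol j := by
  obtain ⟨hm, hrank⟩ := colMate_spec hD hj
  have := oddColRank_lt_numOddCols hj
  obtain ⟨t, ht⟩ := hD
  simp only [IsRaisedCol, hm, hj, true_and, not_lt]
  split_ifs at hrank <;> omega

theorem colLen_colMate_le (hD : Even L.numOddCols) {j : ℕ} (hj : L.IsRaisedCol j) :
    L.colLen (L.colMate j) ≤ L.colLen j := by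
  obtain ⟨hm, hrank⟩ := colMate_spec hD hj.1
  refine L.colLen_anti _ _ (le_of_oddColRank_le hm ?_)
  rw [hrank, if_pos hj.2]
  omega

theorem colMate_le_colMate (hD : Even L.numOddCols) {i j : ℕ} (hi : L.IsRaisedCol i)
    (hj : L.IsRaisedCol j) (hij : i ≤ j) : L.colMate i ≤ L.colMate j := by
  obtain ⟨-, hrank⟩ := colMate_spec hD hi.1
  obtain ⟨hm, hrank'⟩ := colMate_spec hD hj.1
  refine le_of_oddColRank_le hm ?_
  rw [hrank, hrank', if_pos hi.2, if_pos hj.2]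
  have : L.oddColRank i ≤ L.oddColRank j := Nat.count_monotone _ hij
  omega

variable (L) in
def halfColLen (j : ℕ) : ℕ := L.colLen j / 2 + if L.IsRaisedCol j then 1 else 0

theorem halfColLen_of_raised {j : ℕ} (hj : L.IsRaisedCol j) :
    L.halfColLen j = L.colLen j / 2 + 1 :=
  congrArg _ (if_pos hj)

theorem halfColLen_of_not_raised {j : ℕ} (hj : ¬L.IsRaisedCol j) :
    L.halfColLen j = L.colLen j / 2 :=
  (congrArg _ (if_neg hj)).trans (add_zero _)

theorem halfColLen_le_colLen (j : ℕ) : L.halfColLen j ≤ L.colLen j := by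
  unfold halfColLen
  split_ifs with h
  · have := Nat.odd_iff.1 h.1
    omega
  · omega

theorem halfColLen_antitone : Antitone L.halfColLen := by
  intro i j hij
  have hcol := L.colLen_anti _ _ hij
  unfold halfColLen
  split_ifs with hj hi hi
  · omega
  · have hie : Even (L.colLen i) := by
      refine Nat.not_odd_iff_even.1 fun hodd => hi ⟨hodd, ?_⟩
      exact (Nat.count_monotone _ hij).trans_lt hj.2
    have := Nat.odd_iff.1 hj.1
    have := Nat.even_iff.1 hie
    omega
  all_goals omega

variable (L) in
def half : YoungDiagram where
  cells := L.cells.filter fun c => c.1 < L.halfColLen c.2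
  isLowerSet := by
    intro c d hdc hc
    simp only [Finset.coe_filter, Set.mem_ofPred_eq, mem_cells] at hc ⊢
    exact ⟨L.isLowerSet hdc hc.1, hdc.1.trans_lt (hc.2.trans_le (halfColLen_antitone hdc.2))⟩

theorem mem_half_iff {i j : ℕ} : (i, j) ∈ L.half ↔ i < L.halfColLen j := by
  change (i, j) ∈ L.cells.filter _ ↔ _
  rw [Finset.mem_filter, mem_cells, mem_iff_lt_colLen, and_iff_right_iff_imp]
  exact fun h => h.trans_le (halfColLen_le_colLen j)

theorem half_le : L.half ≤ L := fun _ hc => (Finset.mem_filter.1 hc).1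

variable (L) in
noncomputable def jumpRow (j : ℕ) : ℕ := L.halfColLen j + L.colLen (L.colMate j) / 2

variable (L) in
noncomputable def halfFilling (i j : ℕ) : ℕ :=
  if L.halfColLen j ≤ i ∧ i < L.colLen j then
    i + 1 - L.halfColLen j + if L.IsRaisedCol j ∧ L.jumpRow j ≤ i then 1 else 0
  else 0

theorem halfFilling_ne_zero_iff_bounds {i j : ℕ} :
    L.halfFilling i j ≠ 0 ↔ L.halfColLen j ≤ i ∧ i < L.colLen j := by
  rw [halfFilling]
  split_ifs <;> omega

theorem halfFilling_ne_zero_iff {i j : ℕ} :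
    L.halfFilling i j ≠ 0 ↔ (i, j) ∈ L ∧ (i, j) ∉ L.half := by
  rw [mem_iff_lt_colLen, mem_half_iff, halfFilling_ne_zero_iff_bounds]
  omega

theorem halfFilling_of_mem {i j : ℕ} (h₁ : L.halfColLen j ≤ i) (h₂ : i < L.colLen j) :
    L.halfFilling i j =
      i + 1 - L.halfColLen j + if L.IsRaisedCol j ∧ L.jumpRow j ≤ i then 1 else 0 :=
  if_pos ⟨h₁, h₂⟩

theorem halfFilling_lt_halfFilling {i₁ i₂ j : ℕ} (hi : i₁ < i₂)
    (h₂ : L.halfFilling i₂ j ≠ 0) :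
    L.halfFilling i₁ j < L.halfFilling i₂ j := by
  unfold halfFilling at *
  by_cases hj : L.IsRaisedCol j
  · simp only [hj, true_and] at *
    split_ifs at * <;> omega
  · simp only [hj, false_and, if_false] at *
    split_ifs at * <;> omega

theorem halfColLen_lt_of_raised {i j : ℕ} (hi : L.IsRaisedCol i) (hj : ¬L.IsRaisedCol j)
    (hij : i ≤ j) : L.halfColLen j < L.halfColLen i := by
  rw [halfColLen_of_raised hi, halfColLen_of_not_raised hj]
  have := L.colLen_anti _ _ hij
  omega

theorem jumpRow_le_jumpRow (hD : Even L.numOddCols) {i j : ℕ} (hi : L.IsRaisedCol i)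
    (hj : L.IsRaisedCol j) (hij : i ≤ j) : L.jumpRow j ≤ L.jumpRow i := by
  have := L.colLen_anti _ _ (colMate_le_colMate hD hi hj hij)
  have := halfColLen_antitone (L := L) hij
  unfold jumpRow
  omega

theorem halfFilling_le_halfFilling (hD : Even L.numOddCols) {i j₁ j₂ : ℕ} (hj : j₁ ≤ j₂)
    (h₁ : L.halfFilling i j₁ ≠ 0) (h₂ : L.halfFilling i j₂ ≠ 0) :
    L.halfFilling i j₁ ≤ L.halfFilling i j₂ := by
  obtain ⟨h₁l, h₁u⟩ := halfFilling_ne_zero_iff_bounds.1 h₁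
  obtain ⟨h₂l, h₂u⟩ := halfFilling_ne_zero_iff_bounds.1 h₂
  have hanti := halfColLen_antitone (L := L) hj
  rw [halfFilling_of_mem h₁l h₁u, halfFilling_of_mem h₂l h₂u]
  by_cases hjump : L.IsRaisedCol j₁ ∧ L.jumpRow j₁ ≤ i
  · by_cases hr : L.IsRaisedCol j₂
    · rw [if_pos hjump, if_pos ⟨hr, (jumpRow_le_jumpRow hD hjump.1 hr hj).trans hjump.2⟩]
      omega
    · have := halfColLen_lt_of_raised hjump.1 hr hj
      rw [if_pos hjump, if_neg fun h => hr h.1]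
      omega
  · rw [if_neg hjump]
    omega

variable (L) in
/-- Swaps the two columns of a pair exactly when `v` is the value that moves between them. -/
noncomputable def colSwap (v j : ℕ) : ℕ :=
  if L.IsOddCol j ∧ v = min (L.colLen j) (L.colLen (L.colMate j)) / 2 + 1 then L.colMate j else j

theorem colSwap_involutive (hD : Even L.numOddCols) (v : ℕ) :
    Function.Involutive (L.colSwap v) := by
  intro j
  unfold colSwap
  split_ifs with h h'
  · exact colMate_colMate hD h.1
  · rw [colMate_colMate hD h.1, min_comm] at h'
    exact absurd ⟨(colMate_spec hD h.1).1, h.2⟩ h'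
  · rfl

theorem exists_halfFilling_eq_iff_of_not_raised {v j : ℕ} (hj : ¬L.IsRaisedCol j) (hv : 0 < v) :
    (∃ i, L.halfFilling i j = v) ↔ v ≤ L.colLen j - L.halfColLen j := by
  simp only [halfFilling, hj, false_and, ↓reduceIte, add_zero]
  constructor
  · rintro ⟨i, hi⟩
    split_ifs at hi <;> omega
  · intro h
    exact ⟨L.halfColLen j + v - 1, by rw [if_pos (by omega)]; omega⟩

theorem exists_halfFilling_eq_iff_of_raised (hD : Even L.numOddCols) {v j : ℕ}
    (hj : L.IsRaisedCol j) (hv : 0 < v) :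
    (∃ i, L.halfFilling i j = v) ↔
      v ≤ L.halfColLen j ∧ v ≠ L.colLen (L.colMate j) / 2 + 1 := by
  have hle := colLen_colMate_le hD hj
  have := Nat.odd_iff.1 hj.1
  have := halfColLen_of_raised hj
  simp only [halfFilling, jumpRow, hj, true_and]
  constructor
  · rintro ⟨i, hi⟩
    split_ifs at hi <;> omega
  · intro h
    refine ⟨if L.colLen (L.colMate j) / 2 < v then L.halfColLen j + v - 2
      else L.halfColLen j + v - 1, ?_⟩
    split_ifs <;> omega

theorem exists_halfFilling_eq_iff (hD : Even L.numOddCols) {v j : ℕ} (hv : 0 < v) :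
    (∃ i, L.halfFilling i j = v) ↔ v ≤ L.halfColLen (L.colSwap v j) := by
  by_cases hr : L.IsRaisedCol j
  · have hmr : ¬L.IsRaisedCol (L.colMate j) := fun h => (isRaisedCol_colMate_iff hD hr.1).1 h hr
    have := halfColLen_of_not_raised hmr
    rw [exists_halfFilling_eq_iff_of_raised hD hr hv, colSwap,
      if_congr (and_iff_right hr.1) rfl rfl, min_eq_right (colLen_colMate_le hD hr)]
    split_ifs <;> omega
  have := halfColLen_of_not_raised hr
  rw [exists_halfFilling_eq_iff_of_not_raised hr hv, colSwap]
  by_cases hodd : L.IsOddCol j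
  · have hmr : L.IsRaisedCol (L.colMate j) := (isRaisedCol_colMate_iff hD hodd).2 hr
    have hle := colLen_colMate_le hD hmr
    rw [colMate_colMate hD hodd] at hle
    have := halfColLen_of_raised hmr
    have := Nat.odd_iff.1 hodd
    rw [if_congr (and_iff_right hodd) rfl rfl, min_eq_left hle]
    split_ifs <;> omega
  · have := Nat.even_iff.1 (Nat.not_odd_iff_even.1 hodd)
    rw [if_neg fun h => hodd h.1]
    omega

theorem eq_of_halfFilling_eq {i₁ i₂ j v : ℕ} (hv : v ≠ 0) (h₁ : L.halfFilling i₁ j = v)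
    (h₂ : L.halfFilling i₂ j = v) : i₁ = i₂ := by
  rcases lt_trichotomy i₁ i₂ with h | h | h
  · exact absurd (h₁.trans h₂.symm) (halfFilling_lt_halfFilling h (h₂ ▸ hv)).ne
  · exact h
  · exact absurd (h₂.trans h₁.symm) (halfFilling_lt_halfFilling h (h₁ ▸ hv)).ne

theorem natCard_halfFilling_eq (hD : Even L.numOddCols) (k : ℕ) :
    Nat.card {p : ℕ × ℕ // L.halfFilling p.1 p.2 = k + 1} = L.half.rowLen k :=
  calc Nat.card {p : ℕ × ℕ // L.halfFilling p.1 p.2 = k + 1}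
      = Nat.card {j // ∃ i, L.halfFilling i j = k + 1} :=
        natCard_cells_eq_natCard_cols fun _ _ _ => eq_of_halfFilling_eq k.succ_ne_zero
    _ = Nat.card {j // k + 1 ≤ L.halfColLen (L.colSwap (k + 1) j)} :=
        Nat.card_congr (Equiv.subtypeEquivRight fun _ => exists_halfFilling_eq_iff hD k.succ_pos)
    _ = Nat.card {j // k + 1 ≤ L.halfColLen j} :=
        Nat.card_congr (((colSwap_involutive hD _).toPerm _).subtypeEquiv fun _ => Iff.rfl)
    _ = L.half.rowLen k :=
        (Nat.subtype_card _ fun _ => by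
          rw [Finset.mem_range, ← mem_iff_lt_rowLen, mem_half_iff, Nat.lt_iff_add_one_le]).trans
          (Finset.card_range _)

variable (L) in
/-- The cell above, except that the entry just after a skip is matched with the bottom cell of
the mate column, which holds the skipped value. -/
noncomputable def prevCell (c : ℕ × ℕ) : ℕ × ℕ :=
  if L.IsRaisedCol c.2 ∧ c.1 = L.jumpRow c.2 then (L.colLen (L.colMate c.2) - 1, L.colMate c.2)
  else (c.1 - 1, c.2)

variable (L) in
noncomputable def nextCell (c : ℕ × ℕ) : ℕ × ℕ :=
  if L.IsOddCol c.2 ∧ ¬L.IsRaisedCol c.2 ∧ c.1 + 1 = L.colLen c.2 then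
    (L.jumpRow (L.colMate c.2), L.colMate c.2)
  else (c.1 + 1, c.2)

theorem halfFilling_prevCell_of_jump (hD : Even L.numOddCols) {i j k : ℕ}
    (h : L.halfFilling i j = k + 2) (hjump : L.IsRaisedCol j ∧ i = L.jumpRow j) :
    L.halfFilling (L.prevCell (i, j)).1 (L.prevCell (i, j)).2 = k + 1 ∧
      (L.prevCell (i, j)).1 < i ∧ L.nextCell (L.prevCell (i, j)) = (i, j) := by
  obtain ⟨hr, rfl⟩ := hjump
  obtain ⟨hl, hu⟩ := halfFilling_ne_zero_iff_bounds.1 (by omega : L.halfFilling (L.jumpRow j) j ≠ 0)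
  have hm := (colMate_spec hD hr.1).1
  have hmr : ¬L.IsRaisedCol (L.colMate j) := fun h => (isRaisedCol_colMate_iff hD hr.1).1 h hr
  have hle := colLen_colMate_le hD hr
  have := Nat.odd_iff.1 hm
  have := halfColLen_of_raised hr
  have := halfColLen_of_not_raised hmr
  have : L.jumpRow j = L.halfColLen j + L.colLen (L.colMate j) / 2 := rfl
  rw [halfFilling_of_mem hl hu, if_pos ⟨hr, le_rfl⟩] at h
  rw [prevCell, if_pos ⟨hr, rfl⟩]
  dsimp only
  refine ⟨?_, by omega, ?_⟩
  · rw [halfFilling_of_mem (by omega) (by omega), if_neg fun h => hmr h.1]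
    omega
  · simp only [nextCell]
    rw [if_pos ⟨hm, hmr, by omega⟩, colMate_colMate hD hr.1]

theorem halfFilling_prevCell_of_not_jump {i j k : ℕ} (h : L.halfFilling i j = k + 2)
    (hjump : ¬(L.IsRaisedCol j ∧ i = L.jumpRow j)) :
    L.halfFilling (L.prevCell (i, j)).1 (L.prevCell (i, j)).2 = k + 1 ∧
      (L.prevCell (i, j)).1 < i ∧ L.nextCell (L.prevCell (i, j)) = (i, j) := by
  obtain ⟨hl, hu⟩ := halfFilling_ne_zero_iff_bounds.1 (by omega : L.halfFilling i j ≠ 0)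
  have hjr : L.halfColLen j ≤ L.jumpRow j := Nat.le_add_right _ _
  rw [halfFilling_of_mem hl hu] at h
  rw [prevCell, if_neg hjump]
  dsimp only
  have hstep : L.halfColLen j < i ∧ L.halfFilling (i - 1) j = k + 1 := by
    by_cases hstep : L.IsRaisedCol j ∧ L.jumpRow j ≤ i
    · have : L.jumpRow j < i := lt_of_le_of_ne hstep.2 fun e => hjump ⟨hstep.1, e.symm⟩
      rw [if_pos hstep] at h
      rw [halfFilling_of_mem (by omega) (by omega), if_pos ⟨hstep.1, by omega⟩]
      omega
    · rw [if_neg hstep] at h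
      rw [halfFilling_of_mem (by omega) (by omega), if_neg fun h' => hstep ⟨h'.1, by omega⟩]
      omega
  refine ⟨hstep.2, by omega, ?_⟩
  simp only [nextCell]
  rw [if_neg fun hc => by omega]
  congr
  omega

theorem halfFilling_prevCell (hD : Even L.numOddCols) {i j k : ℕ}
    (h : L.halfFilling i j = k + 2) :
    L.halfFilling (L.prevCell (i, j)).1 (L.prevCell (i, j)).2 = k + 1 ∧
      (L.prevCell (i, j)).1 < i ∧ L.nextCell (L.prevCell (i, j)) = (i, j) :=
  if hjump : L.IsRaisedCol j ∧ i = L.jumpRow j then halfFilling_prevCell_of_jump hD h hjump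
  else halfFilling_prevCell_of_not_jump h hjump

theorem finite_halfFilling_ne_zero : {c : ℕ × ℕ | L.halfFilling c.1 c.2 ≠ 0}.Finite :=
  L.cells.finite_toSet.subset fun _ hc => (halfFilling_ne_zero_iff.1 hc).1

theorem even_numOddCols_iff : Even L.numOddCols ↔ Even L.card := by
  rw [L.card_eq_sum_colLen le_rfl, Finset.even_sum_iff_even_card_odd, numOddCols, oddColRank,
    Nat.count_eq_card_filter_range]
  rfl

variable (L) in
noncomputable def halfLRFilling (hD : Even L.numOddCols) : LRFilling L.half L.half L where
  sub := half_le
  T := L.halfFilling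
  supp _ _ := halfFilling_ne_zero_iff
  rows_weak _ _ _ hj h₁ h₂ := halfFilling_le_halfFilling hD hj h₁ h₂
  cols_strict _ _ _ hi _ h₂ := halfFilling_lt_halfFilling hi h₂
  content := natCard_halfFilling_eq hD
  ballot _ _ _ := ballot_of_prev finite_halfFilling_ne_zero L.prevCell L.nextCell
    (fun _ hc => (halfFilling_prevCell hD hc).imp_right And.left)
    (fun _ hc => (halfFilling_prevCell hD hc).2.2) _ _

end YoungDiagram

/-- `N_{lam,lam,lam} > 0` if and only if `|lam|` is even. -/
theorem NL_diag_pos_iff (lam : YoungDiagram) : 0 < NL lam lam lam ↔ Even lam.card := by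
  rw [NL, Nat.card_pos_iff]
  constructor
  · rintro ⟨⟨α, β, γ, F₁, F₂, F₃⟩, -⟩
    have := F₁.card_eq_add
    have := F₂.card_eq_add
    have := F₃.card_eq_add
    exact ⟨β.card, by omega⟩
  · intro h
    have hD := lam.even_numOddCols_iff.2 h
    exact ⟨⟨_, _, _, lam.halfLRFilling hD, lam.halfLRFilling hD, lam.halfLRFilling hD⟩,
      finite_lrFilling_triples lam⟩
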